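/- arXiv:2406.02108 — 3 statements merged into one kernel-verified Lean document; each statement's English description precedes it below -/
import Mathlib

section
/- Let τ be a finite monadic vocabulary, d a positive integer, and M any τ-model of size n. Then C_d(M) ≤ 6d − 3 + c_τ. -/
/-!
Common definitions: unary (monadic) first-order structures, FO[τ] formulas in
negation normal form, formula size / quantifier rank / number of quantifiers,
semantics, description complexity, the equivalence `≡_d`, and the entropies.
-/

open Filter

/-- A `τ`-model of size `n`: each point of the domain `{1,…,n}` (modelled as `Fin n`)
is assigned its `τ`-type, i.e. the set of unary predicates of `τ` that hold at it.
This is exactly the data of a structure `(M, P₁^M, …, P_k^M)` with `P_i^M ⊆ M`. -/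
abbrev UModel (τ : Type) (n : ℕ) := Fin n → Set τ

/-- `|π|_M`: the number of points of `M` realizing the `τ`-type `π`. -/
noncomputable def typeCount {τ : Type} {n : ℕ} (M : UModel τ n) (π : Set τ) : ℕ :=
  Set.ncard {a : Fin n | M a = π}

/-- FO[τ] formulas in negation normal form: atomic formulas are `x = y`, `x ≠ y`,
`P(x)` and `¬P(x)`; the connectives are `∧`, `∨` and the quantifiers `∃`, `∀`.
Variables are indexed by natural numbers. -/
inductive FO (τ : Type) : Type
  | eq : ℕ → ℕ → FO τ
  | ne : ℕ → ℕ → FO τ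
  | pos : τ → ℕ → FO τ
  | npos : τ → ℕ → FO τ
  | and : FO τ → FO τ → FO τ
  | or : FO τ → FO τ → FO τ
  | ex : ℕ → FO τ → FO τ
  | all : ℕ → FO τ → FO τ

namespace FO

variable {τ : Type}

/-- The size of a formula: the number of atomic formulas, binary connectives
(`∧`, `∨`) and quantifiers occurring in it. -/
def size : FO τ → ℕ
  | eq _ _ => 1
  | ne _ _ => 1
  | pos _ _ => 1
  | npos _ _ => 1
  | and φ ψ => φ.size + ψ.size + 1
  | or φ ψ => φ.size + ψ.size + 1
  | ex _ φ => φ.size + 1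
  | all _ φ => φ.size + 1

/-- The quantifier rank: the maximum number of nested quantifiers. -/
def qrank : FO τ → ℕ
  | eq _ _ => 0
  | ne _ _ => 0
  | pos _ _ => 0
  | npos _ _ => 0
  | and φ ψ => max φ.qrank ψ.qrank
  | or φ ψ => max φ.qrank ψ.qrank
  | ex _ φ => φ.qrank + 1
  | all _ φ => φ.qrank + 1

/-- The number of quantifier occurrences in a formula. -/
def qcount : FO τ → ℕ
  | eq _ _ => 0
  | ne _ _ => 0
  | pos _ _ => 0
  | npos _ _ => 0
  | and φ ψ => φ.qcount + ψ.qcount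
  | or φ ψ => φ.qcount + ψ.qcount
  | ex _ φ => φ.qcount + 1
  | all _ φ => φ.qcount + 1

/-- The free variables of a formula. -/
def freeVars : FO τ → Finset ℕ
  | eq x y => {x, y}
  | ne x y => {x, y}
  | pos _ x => {x}
  | npos _ x => {x}
  | and φ ψ => φ.freeVars ∪ ψ.freeVars
  | or φ ψ => φ.freeVars ∪ ψ.freeVars
  | ex x φ => φ.freeVars \ {x}
  | all x φ => φ.freeVars \ {x}

/-- A sentence is a formula with no free variables. -/
def IsSentence (φ : FO τ) : Prop := φ.freeVars = ∅

/-- Satisfaction of a formula in a model under a variable assignment. -/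
def sat {n : ℕ} (M : UModel τ n) : (ℕ → Fin n) → FO τ → Prop
  | s, eq x y => s x = s y
  | s, ne x y => s x ≠ s y
  | s, pos P x => P ∈ M (s x)
  | s, npos P x => P ∉ M (s x)
  | s, and φ ψ => sat M s φ ∧ sat M s ψ
  | s, or φ ψ => sat M s φ ∨ sat M s ψ
  | s, ex x φ => ∃ a : Fin n, sat M (Function.update s x a) φ
  | s, all x φ => ∀ a : Fin n, sat M (Function.update s x a) φ

end FO

/-- Truth of a formula in a model (for sentences, independent of the assignment). -/
def Sat {τ : Type} {n : ℕ} (M : UModel τ n) (φ : FO τ) : Prop :=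
  ∀ s : ℕ → Fin n, FO.sat M s φ

/-- Two `τ`-models of size `n` are isomorphic iff every `τ`-type is realized by
the same number of points in both. -/
def Iso {τ : Type} {n : ℕ} (M M' : UModel τ n) : Prop :=
  ∀ π : Set τ, typeCount M π = typeCount M' π

/-- A sentence `φ` defines the model `M` (among `τ`-models of size `n`) if the
models of size `n` satisfying `φ` are exactly those isomorphic to `M`. -/
def Defines {τ : Type} {n : ℕ} (φ : FO τ) (M : UModel τ n) : Prop :=
  ∀ M' : UModel τ n, Sat M' φ ↔ Iso M' M

/-- The description complexity `C(M)`: the size of the smallest FO[τ] sentence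
defining `M` among `τ`-models of the same size. -/
noncomputable def descComp {τ : Type} {n : ℕ} (M : UModel τ n) : ℕ :=
  sInf {s : ℕ | ∃ φ : FO τ, φ.IsSentence ∧ Defines φ M ∧ φ.size = s}

/-- The constant `c_τ := 15|τ|·2^{|τ|}`. -/
def cTau (τ : Type) [Fintype τ] : ℕ := 15 * Fintype.card τ * 2 ^ Fintype.card τ

/-- `M ≡_d M'`: every `τ`-type realized fewer than `d` times in one of the models
is realized exactly the same number of times in both; equivalently, the counts of
realizing points truncated at `d` coincide for all types. -/
def EquivD {τ : Type} {n : ℕ} (d : ℕ) (M M' : UModel τ n) : Prop :=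
  ∀ π : Set τ, min (typeCount M π) d = min (typeCount M' π) d

/-- `φ` defines the `≡_d`-equivalence class of `M`: the size-`n` models satisfying
`φ` are exactly those `≡_d`-equivalent to `M`. -/
def DefinesD {τ : Type} {n : ℕ} (d : ℕ) (φ : FO τ) (M : UModel τ n) : Prop :=
  ∀ M' : UModel τ n, Sat M' φ ↔ EquivD d M' M

/-- The `d`-description complexity `C_d(M)`: the size of the smallest FO_d[τ]
sentence (quantifier rank at most `d`) true exactly in the size-`n` models
`≡_d`-equivalent to `M`. -/
noncomputable def descCompD {τ : Type} {n : ℕ} (d : ℕ) (M : UModel τ n) : ℕ :=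
  sInf {s : ℕ | ∃ φ : FO τ, φ.IsSentence ∧ φ.qrank ≤ d ∧ DefinesD d φ M ∧ φ.size = s}

/-- The Shannon entropy `H_S(M) = Σ_π −(|π|_M/n)·log₂(|π|_M/n)` (terms with
`|π|_M = 0` vanish, as `Real.logb 2 0 = 0`). -/
noncomputable def HS {τ : Type} [Fintype τ] {n : ℕ} (M : UModel τ n) : ℝ :=
  ∑ π : Set τ, -((typeCount M π : ℝ) / n) * Real.logb 2 ((typeCount M π : ℝ) / n)

/-- The Boltzmann entropy `H_B(M)`: `log₂` of the number of `τ`-models with the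
same domain that are isomorphic to `M`. -/
noncomputable def HB {τ : Type} {n : ℕ} (M : UModel τ n) : ℝ :=
  Real.logb 2 (Nat.card {M' : UModel τ n // Iso M' M})

/-- The Boltzmann entropy with respect to `≡_d`: `log₂` of the number of
`τ`-models with the same domain that are `≡_d`-equivalent to `M`. -/
noncomputable def HBd {τ : Type} {n : ℕ} (d : ℕ) (M : UModel τ n) : ℝ :=
  Real.logb 2 (Nat.card {M' : UModel τ n // EquivD d M' M})

/-!
Put `t π = min (|π|_M, d)`. A model `M'` is `≡_d`-equivalent to `M` iff every type `π` with
`t π ≥ 1` is realized in `M'` and every point `a` of `M'` satisfies `1 ≤ t(type a) ≤ |type a|`,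
with equality when `t(type a) < d`. The first condition costs `O(|τ|)` per type. For the second,
`|type x₁| > i + 1` says that for all `x₂, …, x_{d-1}` some `x₀ ≠ x₁` of the type of `x₁` avoids
`x₂, …, x_{i+1}`. As `i` is determined by the type of `x₁`, all types share a single chain
`D₀ ∨ (x₀ ≠ x₂ ∧ (D₁ ∨ (x₀ ≠ x₃ ∧ …)))`, where `D_i` lists the types of level `i`. The lower
bound uses `i = t - 2` and the upper bound is the negation of the case `i = t - 1`; each has
quantifier rank `d` and size `3d + O(|τ| 2^{|τ|})`.
-/

theorem Finset.lt_card_iff_forall_exists_mem_forall_ne {α : Type*} [Nonempty α]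
    (R : Finset α) (r : ℕ) :
    r < R.card ↔ ∀ f : ℕ → α, ∃ b ∈ R, ∀ l < r, f l ≠ b := by
  classical
  constructor
  · intro hr f
    obtain ⟨b, hb, hbf⟩ := Finset.exists_mem_notMem_of_card_lt_card
      (lt_of_le_of_lt (Finset.card_image_le.trans (Finset.card_range r).le) hr)
      (s := (Finset.range r).image f)
    exact ⟨b, hb, fun l hl hfl => hbf (Finset.mem_image.2 ⟨l, Finset.mem_range.2 hl, hfl⟩)⟩
  · intro h
    by_contra! hr
    obtain ⟨b, hb, hbf⟩ := h fun l => R.toList.getD l (Classical.arbitrary α)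
    obtain ⟨l, hl, rfl⟩ := List.mem_iff_getElem.1 (Finset.mem_toList.2 hb)
    have := R.length_toList
    exact hbf l (by omega) (List.getD_eq_getElem _ _ hl)

theorem Finset.sum_card_filter_eq_add_le {α : Type*} [Fintype α] (t : α → ℕ) (j c : ℕ) :
    ∑ i ∈ Finset.range c, (Finset.univ.filter fun x => t x = j + i).card ≤ Fintype.card α := by
  classical
  rw [← Finset.card_biUnion]
  · exact Finset.card_le_univ _
  · intro i _ i' _ hii'
    exact Finset.disjoint_filter.2 fun x _ h h' => hii' (by omega)

section TypeCount

open scoped Classical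

variable {τ : Type} {n : ℕ}

theorem typeCount_eq_card (M : UModel τ n) (π : Set τ) :
    typeCount M π = (Finset.univ.filter fun a => M a = π).card := by
  rw [typeCount, ← Set.ncard_coe_finset, Finset.coe_filter]
  simp

theorem typeCount_pos_iff (M : UModel τ n) (π : Set τ) :
    0 < typeCount M π ↔ ∃ a, M a = π := by
  rw [typeCount_eq_card, Finset.card_pos]
  simp [Finset.Nonempty]

theorem typeCount_self_pos (M : UModel τ n) (a : Fin n) : 0 < typeCount M (M a) :=
  (typeCount_pos_iff M _).2 ⟨a, rfl⟩

theorem lt_typeCount_iff_forall_exists_avoid (M : UModel τ n) (a : Fin n) (m : ℕ) :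
    m < typeCount M (M a) - 1 ↔
      ∀ f : ℕ → Fin n, ∃ b, b ≠ a ∧ M b = M a ∧ ∀ l < m, f l ≠ b := by
  have : Nonempty (Fin n) := ⟨a⟩
  have hcard : typeCount M (M a) - 1 = ((Finset.univ.filter fun b => M b = M a).erase a).card := by
    rw [typeCount_eq_card, Finset.card_erase_of_mem (by simp)]
  rw [hcard, Finset.lt_card_iff_forall_exists_mem_forall_ne]
  simp [and_assoc]

theorem forall_min_typeCount_eq_iff (M : UModel τ n) {d : ℕ} (hd : 1 ≤ d) {t : Set τ → ℕ}
    (ht : ∀ π, t π ≤ d) :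
    (∀ π, min (typeCount M π) d = t π) ↔
      (∀ π, 1 ≤ t π → ∃ a, M a = π) ∧
        ∀ a, 1 ≤ t (M a) ∧ t (M a) ≤ typeCount M (M a) ∧
          (t (M a) < d → typeCount M (M a) ≤ t (M a)) := by
  constructor
  · intro h
    refine ⟨fun π hπ => (typeCount_pos_iff M π).1 ?_, fun a => ?_⟩
    · have := h π; omega
    · have := h (M a)
      have := typeCount_self_pos M a
      exact ⟨by omega, by omega, fun _ => by omega⟩
  · rintro ⟨hreal, hpt⟩ π
    rcases Nat.eq_zero_or_pos (typeCount M π) with h0 | hpos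
    · have : ¬ 1 ≤ t π := fun h1 => by
        obtain ⟨a, rfl⟩ := hreal π h1
        exact (typeCount_self_pos M a).ne' h0
      omega
    · obtain ⟨a, rfl⟩ := (typeCount_pos_iff M π).1 hpos
      obtain ⟨h1, h2, h3⟩ := hpt a
      have := ht (M a)
      by_cases hd : t (M a) < d
      · have := h3 hd; omega
      · omega

end TypeCount

namespace FO

variable {τ : Type} {n : ℕ}

def neg : FO τ → FO τ
  | eq x y => ne x y
  | ne x y => eq x y
  | pos P x => npos P x
  | npos P x => pos P x
  | and φ ψ => or φ.neg ψ.neg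
  | or φ ψ => and φ.neg ψ.neg
  | ex x φ => all x φ.neg
  | all x φ => ex x φ.neg

theorem sat_neg (M : UModel τ n) (s : ℕ → Fin n) (φ : FO τ) :
    sat M s φ.neg ↔ ¬ sat M s φ := by
  induction φ generalizing s <;> simp [neg, sat, *]
  tauto

@[simp] theorem size_neg (φ : FO τ) : φ.neg.size = φ.size := by
  induction φ <;> simp [neg, size, *]

@[simp] theorem qrank_neg (φ : FO τ) : φ.neg.qrank = φ.qrank := by
  induction φ <;> simp [neg, qrank, *]

@[simp] theorem freeVars_neg (φ : FO τ) : φ.neg.freeVars = φ.freeVars := by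
  induction φ <;> simp [neg, freeVars, *]

def alls (v : ℕ) : ℕ → FO τ → FO τ
  | 0, φ => φ
  | c + 1, φ => all v (alls (v + 1) c φ)

theorem sat_alls (M : UModel τ n) (v c : ℕ) (φ : FO τ) (s : ℕ → Fin n) :
    sat M s (alls v c φ) ↔
      ∀ f : ℕ → Fin n, sat M (fun i => if v ≤ i ∧ i < v + c then f i else s i) φ := by
  induction c generalizing v s with
  | zero =>
    have hs : ∀ f : ℕ → Fin n, (fun i => if v ≤ i ∧ i < v + 0 then f i else s i) = s :=
      fun f => funext fun i => if_neg (by omega)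
    simp only [alls, hs]
    exact ⟨fun h _ => h, fun h => h s⟩
  | succ c ih =>
    have key : ∀ (a : Fin n) (f : ℕ → Fin n),
        (fun i => if v + 1 ≤ i ∧ i < v + 1 + c then f i else Function.update s v a i) =
          fun i => if v ≤ i ∧ i < v + (c + 1) then Function.update f v a i else s i := by
      intro a f
      funext i
      by_cases hi : i = v
      · subst hi; simp
      · simp only [Function.update_of_ne hi]
        congr 1
        apply propext
        omega
    simp only [alls, sat, ih, key]
    refine ⟨fun h f => ?_, fun h a f => h _⟩
    simpa using h (f v) f

@[simp] theorem size_alls (v c : ℕ) (φ : FO τ) : (alls v c φ).size = c + φ.size := by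
  induction c generalizing v <;> simp [alls, size, *]; omega

@[simp] theorem qrank_alls (v c : ℕ) (φ : FO τ) : (alls v c φ).qrank = c + φ.qrank := by
  induction c generalizing v <;> simp [alls, qrank, *]; omega

theorem freeVars_alls (v c : ℕ) (φ : FO τ) :
    (alls v c φ).freeVars = φ.freeVars \ Finset.Ico v (v + c) := by
  induction c generalizing v with
  | zero => simp [alls]
  | succ c ih =>
    ext x
    simp only [alls, freeVars, ih, Finset.mem_sdiff, Finset.mem_Ico, Finset.mem_singleton]
    constructor
    · rintro ⟨⟨hx, hx'⟩, hxv⟩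
      exact ⟨hx, by omega⟩
    · rintro ⟨hx, hx'⟩
      exact ⟨⟨hx, by omega⟩, by omega⟩

section Foldr

variable (l : List (FO τ)) (ψ : FO τ)

theorem sat_foldr_or (M : UModel τ n) (s : ℕ → Fin n) :
    sat M s (l.foldr or ψ) ↔ (∃ φ ∈ l, sat M s φ) ∨ sat M s ψ := by
  induction l <;> simp [sat, *, or_assoc]

theorem sat_foldr_and (M : UModel τ n) (s : ℕ → Fin n) :
    sat M s (l.foldr and ψ) ↔ (∀ φ ∈ l, sat M s φ) ∧ sat M s ψ := by
  induction l <;> simp [sat, *, and_assoc]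

theorem size_foldr_or {m : ℕ} (hl : ∀ φ ∈ l, φ.size + 1 = m) :
    (l.foldr or ψ).size = m * l.length + ψ.size := by
  induction l with
  | nil => simp
  | cons φ l ih =>
    simp only [List.mem_cons, forall_eq_or_imp] at hl
    simp only [List.foldr_cons, size, ih hl.2, List.length_cons]
    rw [← hl.1]; ring

theorem size_foldr_and {m : ℕ} (hl : ∀ φ ∈ l, φ.size + 1 = m) :
    (l.foldr and ψ).size = m * l.length + ψ.size := by
  induction l with
  | nil => simp
  | cons φ l ih =>
    simp only [List.mem_cons, forall_eq_or_imp] at hl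
    simp only [List.foldr_cons, size, ih hl.2, List.length_cons]
    rw [← hl.1]; ring

theorem qrank_foldr_or_le {q : ℕ} (hl : ∀ φ ∈ l, φ.qrank ≤ q) (hψ : ψ.qrank ≤ q) :
    (l.foldr or ψ).qrank ≤ q := by
  induction l <;> simp_all [qrank]

theorem qrank_foldr_and_le {q : ℕ} (hl : ∀ φ ∈ l, φ.qrank ≤ q) (hψ : ψ.qrank ≤ q) :
    (l.foldr and ψ).qrank ≤ q := by
  induction l <;> simp_all [qrank]

theorem freeVars_foldr_or_subset {A : Finset ℕ} (hl : ∀ φ ∈ l, φ.freeVars ⊆ A)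
    (hψ : ψ.freeVars ⊆ A) : (l.foldr or ψ).freeVars ⊆ A := by
  induction l <;> simp_all [freeVars, Finset.union_subset_iff]

theorem freeVars_foldr_and_subset {A : Finset ℕ} (hl : ∀ φ ∈ l, φ.freeVars ⊆ A)
    (hψ : ψ.freeVars ⊆ A) : (l.foldr and ψ).freeVars ⊆ A := by
  induction l <;> simp_all [freeVars, Finset.union_subset_iff]

end Foldr

/-- `⋁_{i ≤ c} (⋁ D i ∧ x₀ ∉ {x_v, …, x_{v+i-1}})`, nested so that each atom `x₀ ≠ x_{v+l}`
occurs only once. -/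
def avoidChain : (ℕ → List (FO τ)) → ℕ → ℕ → FO τ
  | D, _, 0 => (D 0).foldr or (ne 0 0)
  | D, v, c + 1 => (D 0).foldr or ((ne 0 v).and (avoidChain (fun i => D (i + 1)) (v + 1) c))

theorem sat_avoidChain (M : UModel τ n) (s : ℕ → Fin n) (D : ℕ → List (FO τ)) (v c : ℕ) :
    sat M s (avoidChain D v c) ↔ ∃ i ≤ c, (∃ φ ∈ D i, sat M s φ) ∧ ∀ l < i, s 0 ≠ s (v + l) := by
  induction c generalizing D v with
  | zero => simp [avoidChain, sat_foldr_or, sat]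
  | succ c ih =>
    simp only [avoidChain, sat_foldr_or, sat, ih]
    constructor
    · rintro (h | ⟨hv, i, hi, hD, hl⟩)
      · exact ⟨0, by omega, h, by simp⟩
      · refine ⟨i + 1, by omega, hD, fun l hl' => ?_⟩
        rcases l with _ | l
        · exact hv
        · convert hl l (by omega) using 2; omega
    · rintro ⟨_ | i, hi, hD, hl⟩
      · exact Or.inl hD
      · refine Or.inr ⟨hl 0 (by omega), i, by omega, hD, fun l hl' => ?_⟩
        convert hl (l + 1) (by omega) using 2; omega

theorem size_avoidChain (D : ℕ → List (FO τ)) (v c : ℕ) {m : ℕ}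
    (hD : ∀ i, ∀ φ ∈ D i, φ.size + 1 = m) :
    (avoidChain D v c).size = m * ∑ i ∈ Finset.range (c + 1), (D i).length + 2 * c + 1 := by
  induction c generalizing D v with
  | zero => simp [avoidChain, size_foldr_or _ _ (hD 0), size]
  | succ c ih =>
    rw [avoidChain, size_foldr_or _ _ (hD 0), size, size, ih _ _ fun i => hD (i + 1),
      Finset.sum_range_succ' _ (c + 1)]
    ring

theorem qrank_avoidChain (D : ℕ → List (FO τ)) (v c : ℕ) (hD : ∀ i, ∀ φ ∈ D i, φ.qrank = 0) :
    (avoidChain D v c).qrank = 0 := by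
  induction c generalizing D v with
  | zero =>
    exact Nat.eq_zero_of_le_zero <| qrank_foldr_or_le _ _ (fun φ hφ => (hD 0 φ hφ).le) le_rfl
  | succ c ih =>
    refine Nat.eq_zero_of_le_zero <| qrank_foldr_or_le _ _ (fun φ hφ => (hD 0 φ hφ).le) ?_
    simp [qrank, ih _ _ fun i => hD (i + 1)]

theorem freeVars_avoidChain (D : ℕ → List (FO τ)) (v c : ℕ) {A : Finset ℕ} (h0 : 0 ∈ A)
    (hv : ∀ i < c, v + i ∈ A) (hD : ∀ i, ∀ φ ∈ D i, φ.freeVars ⊆ A) :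
    (avoidChain D v c).freeVars ⊆ A := by
  induction c generalizing D v with
  | zero => exact freeVars_foldr_or_subset _ _ (hD 0) (by simpa [freeVars])
  | succ c ih =>
    refine freeVars_foldr_or_subset _ _ (hD 0) ?_
    have hv0 : v ∈ A := by simpa using hv 0 (by omega)
    have hv' : ∀ i < c, v + 1 + i ∈ A := fun i hi => by
      convert hv (i + 1) (by omega) using 1; omega
    simpa [freeVars, Finset.insert_subset_iff, h0, hv0] using ih _ _ hv' fun i => hD (i + 1)

section Construction

open scoped Classical

noncomputable def literal (π : Set τ) (v : ℕ) (P : τ) : FO τ :=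
  if P ∈ π then pos P v else npos P v

theorem sat_literal (M : UModel τ n) (s : ℕ → Fin n) (π : Set τ) (v : ℕ) (P : τ) :
    sat M s (literal π v P) ↔ (P ∈ M (s v) ↔ P ∈ π) := by
  unfold literal
  split_ifs <;> simp [sat, *]

@[simp] theorem size_literal (π : Set τ) (v : ℕ) (P : τ) : (literal π v P).size = 1 := by
  unfold literal; split_ifs <;> rfl

@[simp] theorem qrank_literal (π : Set τ) (v : ℕ) (P : τ) : (literal π v P).qrank = 0 := by
  unfold literal; split_ifs <;> rfl

@[simp] theorem freeVars_literal (π : Set τ) (v : ℕ) (P : τ) :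
    (literal π v P).freeVars = {v} := by
  unfold literal; split_ifs <;> rfl

variable [Fintype τ]

/-- Seeding the conjunction with a literal rather than an atom `⊤` keeps the size at
`2|τ| - 1`; with `2|τ| + 1` the size bound fails for small `|τ|`. -/
noncomputable def hasType (π : Set τ) (v : ℕ) : FO τ :=
  match (Finset.univ : Finset τ).toList with
  | [] => eq v v
  | P :: l => (l.map (literal π v)).foldr and (literal π v P)

theorem sat_hasType (M : UModel τ n) (s : ℕ → Fin n) (π : Set τ) (v : ℕ) :
    sat M s (hasType π v) ↔ M (s v) = π := by
  have hmem : ∀ P, P ∈ (Finset.univ : Finset τ).toList := by simp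
  unfold hasType
  split
  next h =>
    simp only [h, List.not_mem_nil] at hmem
    exact ⟨fun _ => Set.ext fun P => (hmem P).elim, fun _ => rfl⟩
  next P l h =>
    rw [h] at hmem
    simp only [sat_foldr_and, List.mem_map, forall_exists_index, and_imp,
      forall_apply_eq_imp_iff₂, sat_literal, Set.ext_iff]
    exact ⟨fun h Q => (List.mem_cons.1 (hmem Q)).elim (· ▸ h.2) (h.1 Q),
      fun h => ⟨fun Q _ => h Q, h P⟩⟩

theorem size_hasType [Nonempty τ] (π : Set τ) (v : ℕ) :
    (hasType π v).size + 1 = 2 * Fintype.card τ := by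
  have hlen := (Finset.univ : Finset τ).length_toList
  have hcard := Fintype.card_pos (α := τ)
  unfold hasType
  split
  next h => simp [h] at hlen; omega
  next P l h =>
    rw [h, List.length_cons, Finset.card_univ] at hlen
    rw [size_foldr_and _ _ (m := 2) (by simp)]
    simp; omega

theorem qrank_hasType (π : Set τ) (v : ℕ) : (hasType π v).qrank = 0 := by
  unfold hasType
  split
  · rfl
  · exact Nat.eq_zero_of_le_zero (qrank_foldr_and_le _ _ (by simp) (by simp))

theorem freeVars_hasType (π : Set τ) (v : ℕ) : (hasType π v).freeVars ⊆ {v} := by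
  unfold hasType
  split
  · simp [freeVars]
  · exact freeVars_foldr_and_subset _ _ (by simp) (by simp)

noncomputable def hasTypeIn (S : Finset (Set τ)) (v : ℕ) : FO τ :=
  (S.toList.map (hasType · v)).foldr or (ne v v)

theorem sat_hasTypeIn (M : UModel τ n) (s : ℕ → Fin n) (S : Finset (Set τ)) (v : ℕ) :
    sat M s (hasTypeIn S v) ↔ M (s v) ∈ S := by
  simp [hasTypeIn, sat_foldr_or, sat_hasType, sat]

theorem size_hasTypeIn [Nonempty τ] (S : Finset (Set τ)) (v : ℕ) :
    (hasTypeIn S v).size = 2 * Fintype.card τ * S.card + 1 := by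
  rw [hasTypeIn, size_foldr_or _ _ (m := 2 * Fintype.card τ) (by simp [size_hasType])]
  simp [size]

theorem qrank_hasTypeIn (S : Finset (Set τ)) (v : ℕ) : (hasTypeIn S v).qrank = 0 :=
  Nat.eq_zero_of_le_zero <| qrank_foldr_or_le _ _ (by simp [qrank_hasType]) le_rfl

theorem freeVars_hasTypeIn (S : Finset (Set τ)) (v : ℕ) : (hasTypeIn S v).freeVars ⊆ {v} :=
  freeVars_foldr_or_subset _ _
    (by simp only [List.mem_map]; rintro _ ⟨π, -, rfl⟩; exact freeVars_hasType π v)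
    (by simp [freeVars])

noncomputable def bothHaveType (π : Set τ) : FO τ := (hasType π 0).and (hasType π 1)

theorem sat_bothHaveType (M : UModel τ n) (s : ℕ → Fin n) (π : Set τ) :
    sat M s (bothHaveType π) ↔ M (s 0) = π ∧ M (s 1) = π := by
  simp [bothHaveType, sat, sat_hasType]

theorem size_bothHaveType [Nonempty τ] (π : Set τ) :
    (bothHaveType π).size + 1 = 4 * Fintype.card τ := by
  have h0 := size_hasType π 0
  have h1 := size_hasType π 1
  simp only [bothHaveType, size]
  omega

theorem qrank_bothHaveType (π : Set τ) : (bothHaveType π).qrank = 0 := by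
  simp [bothHaveType, qrank, qrank_hasType]

theorem freeVars_bothHaveType (π : Set τ) : (bothHaveType π).freeVars ⊆ {0, 1} :=
  Finset.union_subset ((freeVars_hasType π 0).trans (by simp))
    ((freeVars_hasType π 1).trans (by simp))

noncomputable def levelChain (t : Set τ → ℕ) (j c : ℕ) : FO τ :=
  avoidChain (fun i => (Finset.univ.filter fun π => t π = j + i).toList.map bothHaveType) 2 c

theorem sat_levelChain (M : UModel τ n) (s : ℕ → Fin n) (t : Set τ → ℕ) (j c : ℕ) :
    sat M s (levelChain t j c) ↔
      j ≤ t (M (s 1)) ∧ t (M (s 1)) ≤ j + c ∧ M (s 0) = M (s 1) ∧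
        ∀ l < t (M (s 1)) - j, s 0 ≠ s (2 + l) := by
  simp only [levelChain, sat_avoidChain, List.mem_map, Finset.mem_toList, Finset.mem_filter,
    Finset.mem_univ, true_and]
  constructor
  · rintro ⟨i, hi, ⟨_, ⟨π, hπ, rfl⟩, hsat⟩, hl⟩
    obtain ⟨h0, h1⟩ := (sat_bothHaveType M s _).1 hsat
    rw [h1, h0, hπ]
    exact ⟨by omega, by omega, rfl, by simpa using hl⟩
  · rintro ⟨hj, hc, h01, hl⟩
    exact ⟨t (M (s 1)) - j, by omega,
      ⟨_, ⟨M (s 1), by omega, rfl⟩, (sat_bothHaveType M s _).2 ⟨h01, rfl⟩⟩, hl⟩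

noncomputable def countExceeds (t : Set τ → ℕ) (j c : ℕ) : FO τ :=
  alls 2 c (ex 0 ((ne 0 1).and (levelChain t j c)))

theorem sat_countExceeds (M : UModel τ n) (s : ℕ → Fin n) (t : Set τ → ℕ) (j c : ℕ) :
    sat M s (countExceeds t j c) ↔
      j ≤ t (M (s 1)) ∧ t (M (s 1)) ≤ j + c ∧
        t (M (s 1)) - j < typeCount M (M (s 1)) - 1 := by
  have hshift : Function.Surjective fun (f : ℕ → Fin n) l => f (2 + l) :=
    fun f => ⟨fun i => f (i - 2), by simp⟩
  have key := (lt_typeCount_iff_forall_exists_avoid M (s 1) (t (M (s 1)) - j)).trans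
    hshift.forall
  simp only [countExceeds, sat_alls, sat, sat_levelChain, Function.update_self, ne_eq,
    one_ne_zero, not_false_eq_true, Function.update_of_ne, Nat.not_ofNat_le_one, false_and,
    ↓reduceIte, Nat.add_eq_zero_iff, OfNat.ofNat_ne_zero, le_add_iff_nonneg_right, zero_le,
    add_lt_add_iff_left, true_and]
  constructor
  · intro h
    obtain ⟨-, -, hj, hc, -⟩ := h s
    refine ⟨hj, hc, key.2 fun f => ?_⟩
    obtain ⟨b, hba, -, -, hb, hl⟩ := h f
    exact ⟨b, hba, hb, fun l hl' hfb => hl l hl' (by rw [if_pos (by omega)]; exact hfb.symm)⟩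
  · rintro ⟨hj, hc, hm⟩ f
    obtain ⟨b, hba, hb, hl⟩ := key.1 hm f
    exact ⟨b, hba, hj, hc, hb, fun l hl' => by rw [if_pos (by omega)]; exact (hl l hl').symm⟩

theorem size_countExceeds_le [Nonempty τ] (t : Set τ → ℕ) (j c : ℕ) :
    (countExceeds t j c).size ≤ 4 * Fintype.card τ * Fintype.card (Set τ) + 3 * c + 4 := by
  have hchain := size_avoidChain
    (fun i => (Finset.univ.filter fun π => t π = j + i).toList.map bothHaveType) 2 c
    (m := 4 * Fintype.card τ) (by simp [size_bothHaveType])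
  simp only [List.length_map, Finset.length_toList] at hchain
  have hsum := Nat.mul_le_mul_left (4 * Fintype.card τ)
    (Finset.sum_card_filter_eq_add_le t j (c + 1))
  rw [countExceeds, size_alls, size, size, size, levelChain, hchain]
  omega

theorem qrank_countExceeds (t : Set τ → ℕ) (j c : ℕ) : (countExceeds t j c).qrank = c + 1 := by
  rw [countExceeds, qrank_alls, qrank, qrank, levelChain, qrank_avoidChain]
  · rfl
  · simp [qrank_bothHaveType]

theorem freeVars_countExceeds (t : Set τ → ℕ) (j c : ℕ) :
    (countExceeds t j c).freeVars ⊆ {1} := by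
  have hchain : (levelChain t j c).freeVars ⊆ Finset.range (2 + c) :=
    freeVars_avoidChain _ _ _ (by simp) (fun i hi => by simp; omega)
      (by simp only [List.mem_map]
          rintro i _ ⟨π, -, rfl⟩
          exact (freeVars_bothHaveType π).trans (by intro x; simp; omega))
  intro x hx
  simp only [countExceeds, freeVars_alls, freeVars, Finset.mem_sdiff, Finset.mem_union,
    Finset.mem_insert, Finset.mem_singleton, Finset.mem_Ico] at hx
  rw [Finset.mem_singleton]
  rcases hx with ⟨⟨hx | hx, hx0⟩, hx2⟩
  · omega
  · have := Finset.mem_range.1 (hchain hx)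
    omega

/-- For `d ≤ 1` the counting formulas would exceed quantifier rank `d`, and only
`t(type x₁) = 1` has to be said. -/
noncomputable def pointCondition (t : Set τ → ℕ) (d : ℕ) : FO τ :=
  if d ≤ 1 then hasTypeIn (Finset.univ.filter fun π => t π = 1) 1
  else ((hasTypeIn (Finset.univ.filter fun π => t π = 1) 1).or (countExceeds t 2 (d - 2))).and
    (countExceeds t 1 (d - 2)).neg

theorem sat_pointCondition (M : UModel τ n) (s : ℕ → Fin n) {t : Set τ → ℕ} {d : ℕ}
    (ht : ∀ π, t π ≤ d) :
    sat M s (pointCondition t d) ↔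
      1 ≤ t (M (s 1)) ∧ t (M (s 1)) ≤ typeCount M (M (s 1)) ∧
        (t (M (s 1)) < d → typeCount M (M (s 1)) ≤ t (M (s 1))) := by
  have hN := typeCount_self_pos M (s 1)
  have ht1 := ht (M (s 1))
  unfold pointCondition
  split_ifs with hd
  · simp only [sat_hasTypeIn, Finset.mem_filter, Finset.mem_univ, true_and]
    omega
  · simp only [sat, sat_neg, sat_hasTypeIn, sat_countExceeds, Finset.mem_filter,
      Finset.mem_univ, true_and]
    omega

theorem qrank_pointCondition_lt (t : Set τ → ℕ) {d : ℕ} (hd : 1 ≤ d) :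
    (pointCondition t d).qrank < d := by
  unfold pointCondition
  split_ifs with hd'
  · simp [qrank_hasTypeIn]; omega
  · simp [qrank, qrank_hasTypeIn, qrank_countExceeds]; omega

theorem freeVars_pointCondition (t : Set τ → ℕ) (d : ℕ) :
    (pointCondition t d).freeVars ⊆ {1} := by
  unfold pointCondition
  split_ifs
  · exact freeVars_hasTypeIn _ _
  · simp only [freeVars, freeVars_neg, Finset.union_subset_iff]
    exact ⟨⟨freeVars_hasTypeIn _ _, freeVars_countExceeds _ _ _⟩, freeVars_countExceeds _ _ _⟩

theorem size_pointCondition_le [Nonempty τ] (t : Set τ → ℕ) {d : ℕ} (hd : 1 ≤ d) :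
    (pointCondition t d).size + 1 ≤
      10 * Fintype.card τ * Fintype.card (Set τ) + 6 * d := by
  have hS := Nat.mul_le_mul_left (2 * Fintype.card τ)
    (Finset.card_le_univ (Finset.univ.filter fun π => t π = 1))
  have hsplit : 10 * Fintype.card τ * Fintype.card (Set τ) =
      2 * Fintype.card τ * Fintype.card (Set τ) +
        2 * (4 * Fintype.card τ * Fintype.card (Set τ)) := by ring
  unfold pointCondition
  split_ifs with hd'
  · rw [size_hasTypeIn]; omega
  · have h2 := size_countExceeds_le t 2 (d - 2)
    have h1 := size_countExceeds_le t 1 (d - 2)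
    simp only [size, size_neg, size_hasTypeIn]
    omega

noncomputable def countSentence (t : Set τ → ℕ) (d : ℕ) : FO τ :=
  ((Finset.univ.filter fun π => 1 ≤ t π).toList.map fun π => ex 1 (hasType π 1)).foldr and
    (all 1 (pointCondition t d))

theorem sat_countSentence (M : UModel τ n) (s : ℕ → Fin n) {t : Set τ → ℕ} {d : ℕ}
    (hd : 1 ≤ d) (ht : ∀ π, t π ≤ d) :
    sat M s (countSentence t d) ↔ ∀ π, min (typeCount M π) d = t π := by
  rw [forall_min_typeCount_eq_iff M hd ht]
  simp [countSentence, sat_foldr_and, sat, sat_hasType, sat_pointCondition M _ ht]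

theorem qrank_countSentence_le (t : Set τ → ℕ) {d : ℕ} (hd : 1 ≤ d) :
    (countSentence t d).qrank ≤ d := by
  have := qrank_pointCondition_lt t hd
  refine qrank_foldr_and_le _ _ ?_ (by simp [qrank]; omega)
  simp [qrank, qrank_hasType]; omega

theorem isSentence_countSentence (t : Set τ → ℕ) (d : ℕ) : (countSentence t d).IsSentence := by
  refine Finset.subset_empty.1 (freeVars_foldr_and_subset _ _ ?_ ?_)
  · simp only [List.mem_map]
    rintro _ ⟨π, -, rfl⟩
    simpa [freeVars] using freeVars_hasType π 1
  · simpa [freeVars] using freeVars_pointCondition t d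

theorem size_countSentence_le [Nonempty τ] (t : Set τ → ℕ) {d : ℕ} (hd : 1 ≤ d) :
    (countSentence t d).size ≤ 6 * d - 3 + cTau τ := by
  have hex : ∀ π : Set τ, (ex 1 (hasType π 1)).size = 2 * Fintype.card τ := fun π => by
    have := size_hasType π 1
    simp only [size]
    omega
  have hR := Nat.mul_le_mul_left (2 * Fintype.card τ + 1)
    (Finset.card_le_univ (Finset.univ.filter fun π => 1 ≤ t π))
  have hΘ := size_pointCondition_le t hd
  have hk := Fintype.card_pos (α := τ)
  have hK : 2 ≤ Fintype.card (Set τ) := by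
    rw [Fintype.card_set]
    exact Nat.le_self_pow hk.ne' 2
  rw [countSentence, size_foldr_and _ _ (m := 2 * Fintype.card τ + 1) (by simp [hex]), size,
    cTau, ← Fintype.card_set]
  simp only [List.length_map, Finset.length_toList]
  suffices (2 * Fintype.card τ + 1) * Fintype.card (Set τ) +
      10 * Fintype.card τ * Fintype.card (Set τ) + 3 ≤
        15 * Fintype.card τ * Fintype.card (Set τ) by omega
  nlinarith

end Construction

end FO

theorem descCompD_le_size {τ : Type} {n d : ℕ} {M : UModel τ n} {φ : FO τ}
    (hs : φ.IsSentence) (hq : φ.qrank ≤ d) (hφ : DefinesD d φ M) : descCompD d M ≤ φ.size :=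
  Nat.sInf_le ⟨φ, hs, hq, hφ, rfl⟩

/-- Over the empty domain there are no assignments, so `Sat` holds vacuously; there is also
only one model then, so both sides of `DefinesD` hold. -/
theorem definesD_of_sat_iff {τ : Type} {n d : ℕ} {M : UModel τ n} {φ : FO τ}
    (h : ∀ (M' : UModel τ n) s, FO.sat M' s φ ↔ EquivD d M' M) : DefinesD d φ M := by
  intro M'
  rcases isEmpty_or_nonempty (Fin n) with hn | ⟨⟨a⟩⟩
  · exact ⟨fun _ => Subsingleton.elim M' M ▸ fun _ => rfl, fun _ s => isEmptyElim (s 0)⟩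
  · exact ⟨fun hM' => (h M' fun _ => a).1 (hM' _), fun he s => (h M' s).2 he⟩

/-- For every positive integer `d` and every `τ`-model `M` of size `n`,
`C_d(M) ≤ 6d − 3 + c_τ`. -/
theorem descCompD_le_global (τ : Type) [Fintype τ] {n d : ℕ} (hd : 1 ≤ d)
    (M : UModel τ n) :
    descCompD d M ≤ 6 * d - 3 + cTau τ := by
  rcases isEmpty_or_nonempty τ with hτ | hτ
  · have : Subsingleton (UModel τ n) :=
      ⟨fun M₁ M₂ => funext fun _ => Set.ext fun P => isEmptyElim P⟩
    have htrue : DefinesD d (.all 0 (.eq 0 0)) M :=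
      definesD_of_sat_iff fun M' s => by simp [FO.sat, Subsingleton.elim M' M, EquivD]
    exact (descCompD_le_size (by simp [FO.IsSentence, FO.freeVars]) (by simpa [FO.qrank])
      htrue).trans (by simp [FO.size]; omega)
  · let t : Set τ → ℕ := fun π => min (typeCount M π) d
    have ht : ∀ π, t π ≤ d := fun π => min_le_right _ _
    exact (descCompD_le_size (FO.isSentence_countSentence t d) (FO.qrank_countSentence_le t hd)
      (definesD_of_sat_iff fun M' s => FO.sat_countSentence M' s hd ht)).trans
      (FO.size_countSentence_le t hd)
end

section
/- Let τ be a finite monadic vocabulary, let M be a τ-model of size n realizing ℓ ≥ 2 types π₁,…,π_ℓ, enumerated in ascending order of their numbers of realizing points, and let M' be the τ-model obtained from M by changing the type of one point from π_{ℓ-1} to π_ℓ. Then every FO[τ] sentence φ with M ⊨ φ and M' ⊭ φ contains at least |π_{ℓ-1}|_M quantifier occurrences. -/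
/-!
Common definitions: unary (monadic) first-order structures, FO[τ] formulas in
negation normal form, formula size / quantifier rank / number of quantifiers,
semantics, description complexity, the equivalence `≡_d`, and the entropies.
-/

open Filter

/-!
A sentence with `q` quantifiers cannot tell apart two monadic models whose type counts agree
after truncation at `q`. This is an Ehrenfeucht–Fraïssé argument: as long as the pebbled points
form a partial isomorphism and the counts agree up to `d + #pebbles`, with `d` rounds left,
Duplicator answers a move of Spoiler on a pebbled point by the matching pebble, and a move on a
fresh point by a fresh point of the same type, which exists because the truncated counts agree.
Moving one point from `π_{ℓ-1}` to `π_ℓ` lowers the count of `π_{ℓ-1}` from `|π_{ℓ-1}|_M` to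
`|π_{ℓ-1}|_M - 1` and raises a count that is already at least `|π_{ℓ-1}|_M`, so the two models
agree after truncation at any `q < |π_{ℓ-1}|_M`.
-/

lemma Finset.card_image_eq_card_image_of_eq_iff {α β γ : Type*} [DecidableEq β] [DecidableEq γ]
    {f : α → β} {g : α → γ} {s : Finset α} (h : ∀ x ∈ s, ∀ y ∈ s, f x = f y ↔ g x = g y) :
    (s.image f).card = (s.image g).card := by
  classical
  induction s using Finset.induction_on with
  | empty => simp
  | insert x s hx ih =>
    have hs : ∀ y ∈ s, ∀ z ∈ s, f y = f z ↔ g y = g z := fun y hy z hz =>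
      h y (Finset.mem_insert_of_mem hy) z (Finset.mem_insert_of_mem hz)
    have hmem : f x ∈ s.image f ↔ g x ∈ s.image g := by
      simp only [Finset.mem_image]
      exact exists_congr fun y => and_congr_right fun hy =>
        h y (Finset.mem_insert_of_mem hy) x (Finset.mem_insert_self x s)
    rw [Finset.image_insert, Finset.image_insert]
    by_cases hfx : f x ∈ s.image f
    · rw [Finset.card_insert_of_mem hfx, Finset.card_insert_of_mem (hmem.1 hfx), ih hs]
    · rw [Finset.card_insert_of_notMem hfx, Finset.card_insert_of_notMem (mt hmem.2 hfx), ih hs]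

section

variable {τ : Type} {n : ℕ}

lemma typeCount_eq_card_filter (M : UModel τ n) (σ : Set τ) :
    typeCount M σ = (Finset.univ.filter fun b => M b = σ).card := by
  rw [typeCount, ← Set.ncard_coe_finset]; simp

lemma typeCount_update_add (M : UModel τ n) (a : Fin n) (σ' σ : Set τ) :
    typeCount (Function.update M a σ') σ + (if M a = σ then 1 else 0)
      = typeCount M σ + (if σ' = σ then 1 else 0) := by
  simp only [typeCount_eq_card_filter, Finset.card_filter]
  rw [← Finset.add_sum_erase _ _ (Finset.mem_univ a), ← Finset.add_sum_erase _ _ (Finset.mem_univ a),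
    Finset.sum_congr rfl fun b hb => by rw [Function.update_of_ne (Finset.ne_of_mem_erase hb)]]
  simp only [Function.update_self]
  ring

lemma EquivD.symm {d : ℕ} {M₁ M₂ : UModel τ n} (h : EquivD d M₁ M₂) : EquivD d M₂ M₁ :=
  fun σ => (h σ).symm

lemma EquivD.mono {d e : ℕ} {M₁ M₂ : UModel τ n} (h : EquivD d M₁ M₂) (hed : e ≤ d) :
    EquivD e M₁ M₂ := fun σ => by have := h σ; omega

lemma equivD_update {d : ℕ} (M : UModel τ n) (a : Fin n) (σ' : Set τ)
    (hold : d < typeCount M (M a)) (hnew : d ≤ typeCount M σ') :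
    EquivD d (Function.update M a σ') M := fun σ => by
  have := typeCount_update_add M a σ' σ
  split_ifs at this with h₁ h₂ <;> subst_vars <;> omega

structure IsPartialIso (M₁ M₂ : UModel τ n) (F : Finset ℕ) (s₁ s₂ : ℕ → Fin n) : Prop where
  type_eq : ∀ x ∈ F, M₁ (s₁ x) = M₂ (s₂ x)
  eq_iff : ∀ x ∈ F, ∀ y ∈ F, s₁ x = s₁ y ↔ s₂ x = s₂ y

namespace IsPartialIso

variable {M₁ M₂ : UModel τ n} {F : Finset ℕ} {s₁ s₂ : ℕ → Fin n}

lemma symm (h : IsPartialIso M₁ M₂ F s₁ s₂) : IsPartialIso M₂ M₁ F s₂ s₁ :=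
  ⟨fun x hx => (h.type_eq x hx).symm, fun x hx y hy => (h.eq_iff x hx y hy).symm⟩

lemma mono {G : Finset ℕ} (h : IsPartialIso M₁ M₂ F s₁ s₂) (hGF : G ⊆ F) :
    IsPartialIso M₁ M₂ G s₁ s₂ :=
  ⟨fun x hx => h.type_eq x (hGF hx), fun x hx y hy => h.eq_iff x (hGF hx) y (hGF hy)⟩

lemma update {x : ℕ} {a b : Fin n} (h : IsPartialIso M₁ M₂ (F.erase x) s₁ s₂)
    (htype : M₁ a = M₂ b) (hmatch : ∀ y ∈ F.erase x, s₁ y = a ↔ s₂ y = b) :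
    IsPartialIso M₁ M₂ (insert x F) (Function.update s₁ x a) (Function.update s₂ x b) := by
  have hmem : ∀ y ∈ insert x F, y ≠ x → y ∈ F.erase x := fun y hy hyx =>
    Finset.mem_erase.2 ⟨hyx, (Finset.mem_insert.1 hy).resolve_left hyx⟩
  constructor
  · intro y hy
    rcases eq_or_ne y x with rfl | hyx
    · simpa using htype
    · simpa [hyx] using h.type_eq y (hmem y hy hyx)
  · intro y hy z hz
    by_cases hyx : y = x <;> by_cases hzx : z = x
    · simp [hyx, hzx]
    · simpa [hyx, hzx, eq_comm] using hmatch z (hmem z hz hzx)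
    · simpa [hyx, hzx] using hmatch y (hmem y hy hyx)
    · simpa [hyx, hzx] using h.eq_iff y (hmem y hy hyx) z (hmem z hz hzx)

lemma exists_fresh (h : IsPartialIso M₁ M₂ F s₁ s₂) (hd : EquivD (F.card + 1) M₁ M₂)
    {a : Fin n} (ha : ∀ y ∈ F, s₁ y ≠ a) : ∃ b, M₁ a = M₂ b ∧ ∀ y ∈ F, s₂ y ≠ b := by
  classical
  set σ := M₁ a
  set F' := F.filter fun y => M₁ (s₁ y) = σ
  have hF' : F' = F.filter fun y => M₂ (s₂ y) = σ :=
    Finset.filter_congr fun y hy => by rw [h.type_eq y hy]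
  by_contra! hcover
  have hle₂ : typeCount M₂ σ ≤ (F'.image s₂).card := by
    rw [typeCount_eq_card_filter]
    refine Finset.card_le_card fun b hb => ?_
    obtain ⟨y, hy, rfl⟩ := hcover b (Finset.mem_filter.1 hb).2.symm
    rw [hF']
    exact Finset.mem_image_of_mem _ (Finset.mem_filter.2 ⟨hy, (Finset.mem_filter.1 hb).2⟩)
  have hcard : (F'.image s₁).card = (F'.image s₂).card :=
    Finset.card_image_eq_card_image_of_eq_iff fun y hy z hz =>
      h.eq_iff y (Finset.mem_filter.1 hy).1 z (Finset.mem_filter.1 hz).1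
  have hle₁ : (F'.image s₁).card + 1 ≤ typeCount M₁ σ := by
    rw [typeCount_eq_card_filter, ← Finset.card_insert_of_notMem (a := a)]
    · refine Finset.card_le_card (Finset.insert_subset (by simp [σ]) fun b hb => ?_)
      obtain ⟨y, hy, rfl⟩ := Finset.mem_image.1 hb
      simpa using (Finset.mem_filter.1 hy).2
    · simp only [Finset.mem_image, not_exists, not_and]
      exact fun y hy => ha y (Finset.mem_filter.1 hy).1
  have hF'F : (F'.image s₁).card ≤ F.card :=
    Finset.card_image_le.trans (Finset.card_filter_le _ _)
  have := hd σ
  omega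

lemma exists_update (h : IsPartialIso M₁ M₂ F s₁ s₂) (hd : EquivD (F.card + 1) M₁ M₂)
    (x : ℕ) (a : Fin n) :
    ∃ b, IsPartialIso M₁ M₂ (insert x F) (Function.update s₁ x a) (Function.update s₂ x b) := by
  have h' := h.mono (F.erase_subset x)
  by_cases hold : ∃ y ∈ F.erase x, s₁ y = a
  · obtain ⟨y, hy, rfl⟩ := hold
    exact ⟨s₂ y, h'.update (h'.type_eq y hy) fun z hz => h'.eq_iff z hz y hy⟩
  · have hfresh : ∀ y ∈ F.erase x, s₁ y ≠ a := fun y hy hya => hold ⟨y, hy, hya⟩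
    have hcard : (F.erase x).card + 1 ≤ F.card + 1 := by
      have := F.card_erase_le (a := x); omega
    obtain ⟨b, htype, hb⟩ := h'.exists_fresh (hd.mono hcard) hfresh
    exact ⟨b, h'.update htype fun y hy => iff_of_false (hfresh y hy) (hb y hy)⟩

lemma biTotal_update (h : IsPartialIso M₁ M₂ F s₁ s₂) (hd : EquivD (F.card + 1) M₁ M₂) (x : ℕ) :
    Relator.BiTotal fun a b =>
      IsPartialIso M₁ M₂ (insert x F) (Function.update s₁ x a) (Function.update s₂ x b) :=
  ⟨h.exists_update hd x, fun b => (h.symm.exists_update hd.symm x b).imp fun _ => symm⟩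

end IsPartialIso

lemma FO.sat_iff_of_isPartialIso {M₁ M₂ : UModel τ n} (φ : FO τ) {d : ℕ} {F : Finset ℕ}
    {s₁ s₂ : ℕ → Fin n} (hq : φ.qcount ≤ d) (hfree : φ.freeVars ⊆ F)
    (h : IsPartialIso M₁ M₂ F s₁ s₂) (hd : EquivD (d + F.card) M₁ M₂) :
    φ.sat M₁ s₁ ↔ φ.sat M₂ s₂ := by
  induction φ generalizing d F s₁ s₂ with
  | eq x y | ne x y =>
    simp only [freeVars, Finset.insert_subset_iff, Finset.singleton_subset_iff] at hfree
    simp only [sat, ne_eq, h.eq_iff x hfree.1 y hfree.2]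
  | pos P x | npos P x =>
    simp only [freeVars, Finset.singleton_subset_iff] at hfree
    simp only [sat, h.type_eq x hfree]
  | and ψ χ ihψ ihχ | or ψ χ ihψ ihχ =>
    simp only [qcount] at hq
    simp only [freeVars, Finset.union_subset_iff] at hfree
    simp only [sat, ihψ (by omega) hfree.1 h hd, ihχ (by omega) hfree.2 h hd]
  | ex x ψ ih | all x ψ ih =>
    simp only [qcount] at hq
    obtain ⟨d, rfl⟩ : ∃ e, d = e + 1 := ⟨d - 1, by omega⟩
    have hfree' : ψ.freeVars ⊆ insert x F := by
      rw [Finset.insert_eq]; exact sdiff_le_iff.1 hfree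
    have hext : EquivD (F.card + 1) M₁ M₂ := hd.mono (by omega)
    have hd' : EquivD (d + (insert x F).card) M₁ M₂ :=
      hd.mono (by have := F.card_insert_le x; omega)
    have hrel (a b : Fin n)
        (hab : IsPartialIso M₁ M₂ (insert x F) (Function.update s₁ x a) (Function.update s₂ x b)) :
        ψ.sat M₁ (Function.update s₁ x a) ↔ ψ.sat M₂ (Function.update s₂ x b) :=
      ih (by omega) hfree' hab hd'
    have hbi := h.biTotal_update hext x
    first
    | exact hbi.rel_exists hrel
    | exact hbi.rel_forall hrel

lemma sat_iff_of_equivD {M₁ M₂ : UModel τ n} {φ : FO τ} (hφ : φ.IsSentence)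
    (hd : EquivD φ.qcount M₁ M₂) : Sat M₁ φ ↔ Sat M₂ φ := by
  have hiff (s : ℕ → Fin n) : φ.sat M₁ s ↔ φ.sat M₂ s :=
    φ.sat_iff_of_isPartialIso le_rfl (by rw [hφ]) ⟨by simp, by simp⟩ (by simpa using hd)
  exact ⟨fun h s => (hiff s).1 (h s), fun h s => (hiff s).2 (h s)⟩

end

-- `π ⟨ℓ - 2, _⟩` and `π ⟨ℓ - 1, _⟩` are the paper's `π_{ℓ-1}` and `π_ℓ`.
/-- Let `π 0, …, π (ℓ-1)` (with `ℓ ≥ 2`) enumerate the `τ`-types realized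
in the size-`n` model `M` in ascending order of numbers of realizing points, and let `M'`
be obtained from `M` by changing the type of one point `a` from `π_{ℓ-1}` (i.e. `π ⟨ℓ-2⟩`)
to `π_ℓ` (i.e. `π ⟨ℓ-1⟩`). Then every FO[τ] sentence `φ` with `M ⊨ φ` and `M' ⊭ φ`
contains at least `|π_{ℓ-1}|_M` quantifier occurrences. -/
theorem quantifier_lower_bound (τ : Type) {n ℓ : ℕ} (hℓ : 2 ≤ ℓ)
    (M M' : UModel τ n) (π : Fin ℓ → Set τ)
    (hasc : Monotone fun i => typeCount M (π i))
    (a : Fin n) (ha : M a = π ⟨ℓ - 2, by omega⟩)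
    (hM'a : M' a = π ⟨ℓ - 1, by omega⟩)
    (hM' : ∀ b : Fin n, b ≠ a → M' b = M b)
    (φ : FO τ) (hsent : φ.IsSentence)
    (hMφ : Sat M φ) (hM'φ : ¬ Sat M' φ) :
    typeCount M (π ⟨ℓ - 2, by omega⟩) ≤ φ.qcount := by
  by_contra! hq
  have hle : typeCount M (π ⟨ℓ - 2, by omega⟩) ≤ typeCount M (π ⟨ℓ - 1, by omega⟩) :=
    hasc (Fin.mk_le_mk.2 (by omega))
  have hM'_eq : M' = Function.update M a (π ⟨ℓ - 1, by omega⟩) :=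
    Function.eq_update_iff.2 ⟨hM'a, hM'⟩
  have hequiv : EquivD φ.qcount M M' := by
    rw [hM'_eq]
    exact (equivD_update M a _ (by rwa [ha]) (by omega)).symm
  exact hM'φ ((sat_iff_of_equivD hsent hequiv).1 hMφ)
end

section
/- Let τ be a finite monadic vocabulary and let (M_n)_{n ∈ ℤ₊} be any sequence where M_n is a τ-model of size n. Then H_S(M_n) − (1/n)·H_B(M_n) → 0 as n → ∞; in particular the Shannon entropy H_S(M_n) and the normalized Boltzmann entropy (1/n)·H_B(M_n) are asymptotically equivalent. -/
/-!
Common definitions: unary (monadic) first-order structures, FO[τ] formulas in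
negation normal form, formula size / quantifier rank / number of quantifiers,
semantics, description complexity, the equivalence `≡_d`, and the entropies.
-/

open Filter

/-!
The models isomorphic to `M` form one orbit of `Perm (Fin n)` acting on the domain, and the
stabilizer of `M` permutes each set of points of a given type independently; by orbit–stabilizer,
`2 ^ H_B(M) = n! / ∏_π |π|_M!`. Stirling gives `log m! = m log m - m + R(m)` with
`0 ≤ R(m) ≤ log m + 1`. Since `∑_π |π|_M = n`, the main terms of `log n! - ∑_π log |π|_M!` add up
to exactly `n log n - ∑_π |π|_M log |π|_M = n·H_S(M)·log 2`, so `n·(H_S(M) - H_B(M)/n)·log 2` is a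
signed sum of `2^|τ| + 1` remainders, which is `O(log n)`.
-/

open Equiv MulAction Finset
open scoped Nat

section Stirling

open Real

noncomputable def stirlingRemainder (m : ℕ) : ℝ := log m ! - (m * log m - m)

theorem stirlingRemainder_nonneg (m : ℕ) : 0 ≤ stirlingRemainder m := by
  rcases eq_or_ne m 0 with rfl | hm
  · simp [stirlingRemainder]
  have hstirling := Stirling.le_log_factorial_stirling hm
  have hlog_m : 0 ≤ log m := log_natCast_nonneg m
  have hlog_two_pi : 0 ≤ log (2 * π) := log_nonneg (by linarith [pi_gt_three])
  unfold stirlingRemainder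
  linarith

theorem stirlingRemainder_le (m : ℕ) : stirlingRemainder m ≤ log m + 1 := by
  rcases eq_or_ne m 0 with rfl | hm
  · simp [stirlingRemainder]
  have hm' : (0 : ℝ) < m := by positivity
  -- the Stirling sequence decreases from its first term `e / √2`
  have hseq : log (Stirling.stirlingSeq m) ≤ 1 - log 2 / 2 := by
    obtain ⟨k, rfl⟩ := Nat.exists_eq_add_one_of_ne_zero hm
    have h := Stirling.log_stirlingSeq'_antitone (Nat.zero_le k)
    simp only [Function.comp_apply, Nat.succ_eq_add_one, zero_add] at h
    rwa [Stirling.stirlingSeq_one, log_div (exp_ne_zero 1) (by positivity), log_exp,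
      log_sqrt zero_le_two] at h
  have hformula := Stirling.log_stirlingSeq_formula m
  rw [log_mul two_ne_zero hm'.ne', log_div hm'.ne' (exp_ne_zero 1), log_exp] at hformula
  have hlog : 0 ≤ log (m : ℝ) := log_natCast_nonneg m
  unfold stirlingRemainder
  linarith

end Stirling

section Counting

variable {τ : Type} {n : ℕ}

theorem typeCount_eq_natCard (M : UModel τ n) (π : Set τ) :
    typeCount M π = Nat.card {a // M a = π} :=
  (Nat.card_coe_set_eq _).symm

theorem sum_typeCount [Fintype τ] (M : UModel τ n) : ∑ π, typeCount M π = n := by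
  simp only [typeCount_eq_natCard]
  rw [← Nat.card_sigma, Nat.card_congr (sigmaFiberEquiv M), Nat.card_fin]

theorem typeCount_le [Fintype τ] (M : UModel τ n) (π : Set τ) : typeCount M π ≤ n :=
  (single_le_sum (f := typeCount M) (fun _ _ => Nat.zero_le _) (mem_univ π)).trans_eq
    (sum_typeCount M)

theorem iso_iff_mem_orbit (M M' : UModel τ n) :
    Iso M' M ↔ M' ∈ orbit (Perm (Fin n))ᵈᵐᵃ M := by
  constructor
  · intro h
    have hfiber (π : Set τ) : Nonempty ({a // M' a = π} ≃ {a // M a = π}) := by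
      rw [← Finite.card_eq, ← typeCount_eq_natCard, ← typeCount_eq_natCard, h π]
    refine ⟨DomMulAct.mk (ofFiberEquiv fun π => (hfiber π).some), funext fun a => ?_⟩
    exact ofFiberEquiv_map _ a
  · rintro ⟨g, rfl⟩ π
    rw [typeCount_eq_natCard, typeCount_eq_natCard]
    exact Nat.card_congr ((DomMulAct.mk.symm g).subtypeEquiv fun _ => Iff.rfl)

theorem card_iso_mul_prod_factorial [Fintype τ] (M : UModel τ n) :
    Nat.card {M' // Iso M' M} * ∏ π, (typeCount M π)! = n ! := by
  have horbit : Nat.card {M' // Iso M' M} = Nat.card (orbit (Perm (Fin n))ᵈᵐᵃ M) :=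
    Nat.card_congr (subtypeEquivRight fun M' => iso_iff_mem_orbit M M')
  have hstab : Nat.card (stabilizer (Perm (Fin n))ᵈᵐᵃ M) = ∏ π, (typeCount M π)! :=
    calc Nat.card (stabilizer (Perm (Fin n))ᵈᵐᵃ M) = Nat.card {g : Perm (Fin n) // M ∘ g = M} :=
          Nat.card_congr (subtypeEquiv DomMulAct.mk.symm fun _ => DomMulAct.mem_stabilizer_iff)
      _ = ∏ π, (typeCount M π)! := (Nat.card_coe_set_eq _).trans (DomMulAct.stabilizer_ncard M)
  rw [horbit, ← hstab, ← Nat.card_prod, Nat.card_congr (orbitProdStabilizerEquivGroup _ M),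
    Nat.card_congr DomMulAct.mk.symm, Nat.card_perm, Nat.card_fin]

end Counting

section Entropy

open Real (log logb)

variable {τ : Type} [Fintype τ] {n : ℕ}

theorem HS_eq (M : UModel τ n) :
    HS M = (n * log n - ∑ π, (typeCount M π : ℝ) * log (typeCount M π)) / (n * log 2) := by
  have hterm (c : ℕ) (hc : c ≤ n) : -((c : ℝ) / n) * logb 2 ((c : ℝ) / n) =
      ((c : ℝ) * log n - c * log c) / (n * log 2) := by
    rcases eq_or_ne c 0 with rfl | hc0
    · simp
    have hn : (n : ℝ) ≠ 0 := by norm_cast; omega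
    rw [logb, Real.log_div (by exact_mod_cast hc0) hn]
    field_simp
    ring
  have hsum : (n : ℝ) * log n = ∑ π, (typeCount M π : ℝ) * log n := by
    rw [← sum_mul]
    exact_mod_cast congrArg (fun k : ℕ => (k : ℝ) * log n) (sum_typeCount M).symm
  rw [HS, hsum, ← sum_sub_distrib, sum_div]
  exact sum_congr rfl fun π _ => hterm _ (typeCount_le M π)

theorem HB_eq (M : UModel τ n) :
    HB M = (log n ! - ∑ π, log (typeCount M π)!) / log 2 := by
  have hcard : (Nat.card {M' // Iso M' M} : ℝ) * ∏ π, ((typeCount M π)! : ℝ) = n ! := by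
    exact_mod_cast card_iso_mul_prod_factorial M
  have hpos : (0 : ℝ) < Nat.card {M' // Iso M' M} :=
    Nat.cast_pos.mpr (Nat.card_pos_iff.mpr ⟨⟨⟨M, fun _ => rfl⟩⟩, inferInstance⟩)
  rw [HB, logb, ← hcard, Real.log_mul hpos.ne' (prod_ne_zero_iff.mpr fun π _ => by positivity),
    Real.log_prod fun π _ => by positivity]
  ring

theorem HS_sub_HB_eq (M : UModel τ n) :
    HS M - 1 / n * HB M =
      (∑ π, stirlingRemainder (typeCount M π) - stirlingRemainder n) / (n * log 2) := by
  have hsum : ∑ π, (typeCount M π : ℝ) = n := by exact_mod_cast sum_typeCount M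
  rw [HS_eq, HB_eq]
  simp only [stirlingRemainder, sum_sub_distrib, hsum]
  ring

theorem abs_HS_sub_HB_le (M : UModel τ n) :
    |HS M - 1 / n * HB M| ≤ (Fintype.card (Set τ) + 1) / log 2 * ((log n + 1) / n) := by
  have hlog (c : ℕ) (hc : c ≤ n) : log c ≤ log n := by
    rcases eq_or_ne c 0 with rfl | hc0
    · simpa using Real.log_natCast_nonneg n
    exact Real.log_le_log (by positivity) (by exact_mod_cast hc)
  have hsum : ∑ π, stirlingRemainder (typeCount M π) ≤ Fintype.card (Set τ) * (log n + 1) := by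
    refine (sum_le_card_nsmul univ (fun π => stirlingRemainder (typeCount M π)) (log n + 1)
      fun π _ => ?_).trans_eq (by rw [card_univ, nsmul_eq_mul])
    linarith [stirlingRemainder_le (typeCount M π), hlog _ (typeCount_le M π)]
  have hnum : |∑ π, stirlingRemainder (typeCount M π) - stirlingRemainder n| ≤
      (Fintype.card (Set τ) + 1) * (log n + 1) := by
    have hsum_nonneg := sum_nonneg fun π (_ : π ∈ univ) => stirlingRemainder_nonneg (typeCount M π)
    rw [abs_le]
    constructor <;> linarith [stirlingRemainder_nonneg n, stirlingRemainder_le n]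
  rw [HS_sub_HB_eq, abs_div, abs_of_nonneg (by positivity : (0 : ℝ) ≤ n * log 2)]
  calc _ ≤ (Fintype.card (Set τ) + 1) * (log n + 1) / (n * log 2) := by gcongr
    _ = _ := by ring

end Entropy

theorem tendsto_log_add_one_div_atTop :
    Filter.Tendsto (fun n : ℕ => (Real.log n + 1) / n) Filter.atTop (nhds 0) := by
  have hlog := (Real.tendsto_pow_log_div_mul_add_atTop 1 0 1 one_ne_zero).comp
    tendsto_natCast_atTop_atTop
  simpa [add_div] using hlog.add tendsto_one_div_atTop_nhds_zero_nat

/-- For any sequence `(M_n)` where `M_n` is a `τ`-model of size `n`,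
`H_S(M_n) − (1/n)·H_B(M_n) → 0` as `n → ∞`; in particular the Shannon entropy and the
normalized Boltzmann entropy are asymptotically equivalent. -/
theorem shannon_boltzmann_asymptotic (τ : Type) [Fintype τ]
    (M : (n : ℕ) → UModel τ n) :
    Filter.Tendsto (fun n : ℕ => HS (M n) - (1 / n) * HB (M n))
      Filter.atTop (nhds 0) := by
  refine squeeze_zero_norm (fun n => abs_HS_sub_HB_le (M n)) ?_
  simpa using tendsto_log_add_one_div_atTop.const_mul ((Fintype.card (Set τ) + 1) / Real.log 2)
end
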